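/- (Uniform bound from subproblem optimality.) Let V ∈ S with every column of G(V) nonzero and let V⁺ := Proj_S(G(V)) be the algorithmic update. Then for every W ∈ S, ρ·⟨Γ(V), V⁺ − W⟩ ≤ 4L_f̃ p + 2√p·‖∇f̃(E/√m)‖_F + (5/2)Lp. -/

import Mathlib

open Matrix

noncomputable section

/-- Squared Frobenius norm `‖A‖_F²`. -/
def frobSq {a b : ℕ} (A : Matrix (Fin a) (Fin b) ℝ) : ℝ := ∑ i, ∑ j, A i j ^ 2

/-- Frobenius norm `‖A‖_F`. -/
def frobNorm {a b : ℕ} (A : Matrix (Fin a) (Fin b) ℝ) : ℝ := Real.sqrt (frobSq A)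

/-- Trace (Frobenius) inner product `⟨A,B⟩ = tr(AᵀB)`. -/
def frobInner {a b : ℕ} (A B : Matrix (Fin a) (Fin b) ℝ) : ℝ := ∑ i, ∑ j, A i j * B i j

/-- Squared spectral norm: `sup {‖Vx‖₂² : ‖x‖₂ = 1}`. -/
def specSq {a b : ℕ} (V : Matrix (Fin a) (Fin b) ℝ) : ℝ :=
  sSup {c | ∃ x : Fin b → ℝ, (∑ j, x j ^ 2) = 1 ∧ c = ∑ i, (∑ j, V i j * x j) ^ 2}

/-- Spectral norm (largest singular value). -/
def specNorm {a b : ℕ} (V : Matrix (Fin a) (Fin b) ℝ) : ℝ := Real.sqrt (specSq V)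

/-- Membership in `S`: all columns have unit Euclidean norm. -/
def unitCols {a b : ℕ} (V : Matrix (Fin a) (Fin b) ℝ) : Prop :=
  ∀ j, ∑ i, V i j ^ 2 = 1

/-- Column-wise normalization to unit Euclidean norm (projection onto `S`). -/
def normalizeCols {a b : ℕ} (G : Matrix (Fin a) (Fin b) ℝ) : Matrix (Fin a) (Fin b) ℝ :=
  Matrix.of fun i j => G i j / Real.sqrt (∑ i', G i' j ^ 2)

/-- `u` is a unit eigenvector of `VᵀV` associated with its largest eigenvalue `lam`
(the Rayleigh-quotient bound states that `lam` is the largest eigenvalue). -/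
def isTopEigen {a b : ℕ} (V : Matrix (Fin a) (Fin b) ℝ) (lam : ℝ) (u : Fin b → ℝ) : Prop :=
  (∑ j, u j ^ 2) = 1 ∧ (Vᵀ * V) *ᵥ u = lam • u ∧
    ∀ x : Fin b → ℝ, x ⬝ᵥ ((Vᵀ * V) *ᵥ x) ≤ lam * (x ⬝ᵥ x)

/-- `Γ(V) = −2 V u uᵀ` where `u = u₁(V)`. -/
def GammaOf {a b : ℕ} (V : Matrix (Fin a) (Fin b) ℝ) (u : Fin b → ℝ) :
    Matrix (Fin a) (Fin b) ℝ := (-2 : ℝ) • (V * vecMulVec u u)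

/-- The update direction `G(V) = (2ρ+L)⁻¹ (L V − ∇f̃(V) − ρ Γ(V))`. -/
def Gmap {a b : ℕ} (gradf : Matrix (Fin a) (Fin b) ℝ → Matrix (Fin a) (Fin b) ℝ)
    (ρ L : ℝ) (V : Matrix (Fin a) (Fin b) ℝ) (u : Fin b → ℝ) : Matrix (Fin a) (Fin b) ℝ :=
  (2 * ρ + L)⁻¹ • (L • V - gradf V - ρ • GammaOf V u)

/-- Penalized objective `Φ_ρ(V) = f̃(V) + ρ(‖V‖_F² − ‖V‖²)`. -/
def Phi {a b : ℕ} (f : Matrix (Fin a) (Fin b) ℝ → ℝ) (ρ : ℝ)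
    (V : Matrix (Fin a) (Fin b) ℝ) : ℝ := f V + ρ * (frobSq V - specSq V)

/-- Stationarity residual `𝒢_ρ(V,Γ) = inf_t ‖∇f̃(V) + 2ρV + ρΓ + V·Diag(t)‖_F`. -/
def Gres {a b : ℕ} (gradf : Matrix (Fin a) (Fin b) ℝ → Matrix (Fin a) (Fin b) ℝ) (ρ : ℝ)
    (V Γ : Matrix (Fin a) (Fin b) ℝ) : ℝ :=
  ⨅ t : Fin b → ℝ, frobNorm (gradf V + (2 * ρ) • V + ρ • Γ + V * Matrix.diagonal t)

/-- The all-ones matrix `E` scaled by `1/√m`. -/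
def Escaled (a b : ℕ) : Matrix (Fin a) (Fin b) ℝ :=
  (Real.sqrt a)⁻¹ • Matrix.of fun _ _ => (1 : ℝ)

attribute [local instance] Matrix.frobeniusNormedAddCommGroup Matrix.frobeniusNormedSpace

/-- The continuous linear functional `W ↦ ⟨A, W⟩` (Frobenius pairing); used to state that
`∇f̃` is the gradient of `f̃` with respect to the trace inner product. -/
def frobCLM {a b : ℕ} (A : Matrix (Fin a) (Fin b) ℝ) :
    Matrix (Fin a) (Fin b) ℝ →L[ℝ] ℝ :=
  LinearMap.toContinuousLinearMap
    { toFun := fun W => frobInner A W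
      map_add' := fun W W' => by
        simp [frobInner, Matrix.add_apply, mul_add, Finset.sum_add_distrib]
      map_smul' := fun c W => by
        simp [frobInner, Matrix.smul_apply, smul_eq_mul, Finset.mul_sum, mul_left_comm] }


/-!
The update maximizes the linear functional `⟨G(V), ·⟩` over `S`, because column-wise
normalization maximizes `⟨g, w⟩` over unit vectors `w`. Multiplying `G(V)` by `2ρ + L > 0`,
this optimality says `ρ⟨Γ(V), V⁺ − W⟩ ≤ ⟨LV − ∇f̃(V), V⁺ − W⟩`, and Cauchy–Schwarz bounds the
right side: every point of `S` has Frobenius norm `√p` (so does `E/√m`), hence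
`‖V⁺ − W‖_F ≤ 2√p` and, by the Lipschitz bound through `E/√m`,
`‖∇f̃(V)‖_F ≤ 2L_f̃√p + ‖∇f̃(E/√m)‖_F`.
-/

section UnitColumns

variable {a b : ℕ}

lemma frobNorm_eq_norm (A : Matrix (Fin a) (Fin b) ℝ) : frobNorm A = ‖A‖ := by
  simp [frobNorm, frobSq, Matrix.frobenius_norm_def, Real.sqrt_eq_rpow]

lemma frobInner_le_norm_mul_norm (A B : Matrix (Fin a) (Fin b) ℝ) :
    frobInner A B ≤ ‖A‖ * ‖B‖ := by
  simpa only [← frobNorm_eq_norm, frobNorm, frobSq, frobInner, Fintype.sum_prod_type] using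
    Real.sum_mul_le_sqrt_mul_sqrt Finset.univ (fun q : Fin a × Fin b => A q.1 q.2)
      (fun q => B q.1 q.2)

lemma frobInner_sub_left (A B C : Matrix (Fin a) (Fin b) ℝ) :
    frobInner (A - B) C = frobInner A C - frobInner B C := by
  simp [frobInner, sub_mul, Finset.sum_sub_distrib]

lemma frobInner_sub_right (A B C : Matrix (Fin a) (Fin b) ℝ) :
    frobInner A (B - C) = frobInner A B - frobInner A C := by
  simp [frobInner, mul_sub, Finset.sum_sub_distrib]

lemma frobInner_smul_left (c : ℝ) (A B : Matrix (Fin a) (Fin b) ℝ) :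
    frobInner (c • A) B = c * frobInner A B := by
  simp [frobInner, Finset.mul_sum, mul_assoc]

lemma norm_of_unitCols {A : Matrix (Fin a) (Fin b) ℝ} (hA : unitCols A) : ‖A‖ = √b := by
  have hsq : frobSq A = b := by
    rw [frobSq, Finset.sum_comm, Finset.sum_congr rfl fun j _ => hA j]
    simp
  rw [← frobNorm_eq_norm, frobNorm, hsq]

lemma norm_sub_le_of_unitCols {A B : Matrix (Fin a) (Fin b) ℝ} (hA : unitCols A)
    (hB : unitCols B) : ‖A - B‖ ≤ 2 * √b := by
  linarith [norm_sub_le A B, norm_of_unitCols hA, norm_of_unitCols hB]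

lemma unitCols_Escaled (ha : 0 < a) : unitCols (Escaled a b) := by
  intro j
  have ha' : (0 : ℝ) < a := by exact_mod_cast ha
  simp [Escaled, Real.sq_sqrt ha'.le, ha'.ne']

lemma unitCols_normalizeCols {G : Matrix (Fin a) (Fin b) ℝ} (hG : ∀ j, ∃ i, G i j ≠ 0) :
    unitCols (normalizeCols G) := by
  intro j
  obtain ⟨i, hi⟩ := hG j
  have hpos : 0 < ∑ i, G i j ^ 2 :=
    Finset.sum_pos' (fun _ _ => sq_nonneg _) ⟨i, Finset.mem_univ i, by positivity⟩
  simp only [normalizeCols, of_apply, div_pow, Real.sq_sqrt hpos.le, ← Finset.sum_div,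
    div_self hpos.ne']

lemma frobInner_normalizeCols (G : Matrix (Fin a) (Fin b) ℝ) :
    frobInner G (normalizeCols G) = ∑ j, √(∑ i, G i j ^ 2) := by
  rw [frobInner, Finset.sum_comm]
  refine Finset.sum_congr rfl fun j _ => ?_
  simp only [normalizeCols, of_apply, ← mul_div_assoc, ← pow_two, ← Finset.sum_div,
    Real.div_sqrt]

/-- Also for zero columns of `G`, which `normalizeCols` sends to `0 / 0 = 0`. -/
lemma frobInner_le_frobInner_normalizeCols (G : Matrix (Fin a) (Fin b) ℝ)
    {W : Matrix (Fin a) (Fin b) ℝ} (hW : unitCols W) :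
    frobInner G W ≤ frobInner G (normalizeCols G) := by
  rw [frobInner_normalizeCols, frobInner, Finset.sum_comm]
  refine Finset.sum_le_sum fun j _ => ?_
  simpa [hW j] using Real.sum_mul_le_sqrt_mul_sqrt Finset.univ (fun i => G i j) (W · j)

lemma mul_frobInner_le_of_smul_eq {c ρ : ℝ} (hc : 0 < c) {G D Γ W : Matrix (Fin a) (Fin b) ℝ}
    (hG : c • G = D - ρ • Γ) (hW : unitCols W) :
    ρ * frobInner Γ (normalizeCols G - W) ≤ frobInner D (normalizeCols G - W) := by
  have hopt : 0 ≤ frobInner (c • G) (normalizeCols G - W) := by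
    rw [frobInner_smul_left, frobInner_sub_right]
    exact mul_nonneg hc.le (sub_nonneg.2 (frobInner_le_frobInner_normalizeCols G hW))
  rw [hG, frobInner_sub_left, frobInner_smul_left] at hopt
  linarith

end UnitColumns

section Update

variable {m p : ℕ} {gradf : Matrix (Fin m) (Fin p) ℝ → Matrix (Fin m) (Fin p) ℝ}
  {ρ L : ℝ} {V : Matrix (Fin m) (Fin p) ℝ} {u : Fin p → ℝ}

lemma smul_Gmap (hc : 2 * ρ + L ≠ 0) :
    (2 * ρ + L) • Gmap gradf ρ L V u = L • V - gradf V - ρ • GammaOf V u := by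
  rw [Gmap, smul_smul, mul_inv_cancel₀ hc, one_smul]

lemma norm_gradf_le_of_unitCols (hm : 0 < m) {Lf : ℝ} (hLf : 0 ≤ Lf)
    (hlip : ∀ W W' : Matrix (Fin m) (Fin p) ℝ, ‖gradf W - gradf W'‖ ≤ Lf * ‖W - W'‖)
    (hV : unitCols V) : ‖gradf V‖ ≤ 2 * Lf * √p + ‖gradf (Escaled m p)‖ := by
  have hdist := norm_sub_le_of_unitCols hV (unitCols_Escaled (b := p) hm)
  calc ‖gradf V‖ ≤ ‖gradf V - gradf (Escaled m p)‖ + ‖gradf (Escaled m p)‖ :=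
        norm_le_norm_sub_add _ _
    _ ≤ Lf * (2 * √p) + ‖gradf (Escaled m p)‖ := by
        gcongr
        exact (hlip _ _).trans (by gcongr)
    _ = 2 * Lf * √p + ‖gradf (Escaled m p)‖ := by ring

end Update

theorem dcra_uniform_bound_general (m p : ℕ) (hm : 0 < m)
    (gradf : Matrix (Fin m) (Fin p) ℝ → Matrix (Fin m) (Fin p) ℝ)
    (Lf : ℝ) (hLf : 0 < Lf)
    (hlip : ∀ W W' : Matrix (Fin m) (Fin p) ℝ,
      frobNorm (gradf W - gradf W') ≤ Lf * frobNorm (W - W'))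
    (ρ L : ℝ) (hρ : 0 < ρ) (hL : 0 < L)
    (V : Matrix (Fin m) (Fin p) ℝ) (hV : unitCols V)
    (u : Fin p → ℝ)
    (hcol : ∀ j, ∃ i, Gmap gradf ρ L V u i j ≠ 0)
    (Vp : Matrix (Fin m) (Fin p) ℝ) (hVp : Vp = normalizeCols (Gmap gradf ρ L V u)) :
    ∀ W : Matrix (Fin m) (Fin p) ℝ, unitCols W →
      ρ * frobInner (GammaOf V u) (Vp - W) ≤
        4 * Lf * (p : ℝ) + 2 * Real.sqrt p * frobNorm (gradf (Escaled m p))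
          + (5 / 2) * L * (p : ℝ) := by
  intro W hW
  simp only [frobNorm_eq_norm] at hlip ⊢
  set g := ‖gradf (Escaled m p)‖
  have hgrad := norm_gradf_le_of_unitCols hm hLf.le hlip hV
  have hD : ‖L • V - gradf V‖ ≤ L * √p + (2 * Lf * √p + g) := by
    grw [norm_sub_le, norm_smul, Real.norm_of_nonneg hL.le, norm_of_unitCols hV, hgrad]
  have hVpW : ‖Vp - W‖ ≤ 2 * √p :=
    norm_sub_le_of_unitCols (hVp ▸ unitCols_normalizeCols hcol) hW
  have hsqrt : √(p : ℝ) ^ 2 = p := Real.sq_sqrt p.cast_nonneg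
  calc ρ * frobInner (GammaOf V u) (Vp - W)
      ≤ frobInner (L • V - gradf V) (Vp - W) :=
        hVp ▸ mul_frobInner_le_of_smul_eq (by linarith) (smul_Gmap (by linarith)) hW
    _ ≤ ‖L • V - gradf V‖ * ‖Vp - W‖ := frobInner_le_norm_mul_norm _ _
    _ ≤ (L * √p + (2 * Lf * √p + g)) * (2 * √p) := by gcongr
    _ = 4 * Lf * p + 2 * √p * g + 2 * L * p := by
        linear_combination (2 * L + 4 * Lf) * hsqrt
    _ ≤ 4 * Lf * p + 2 * √p * g + (5 / 2) * L * p := by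
        gcongr; linarith [mul_nonneg hL.le p.cast_nonneg]

/-- uniform bound from subproblem optimality. For the algorithmic update
`V⁺ = Proj_S(G(V))` and every `W ∈ S`,
`ρ⟨Γ(V), V⁺ − W⟩ ≤ 4L_f̃ p + 2√p‖∇f̃(E/√m)‖_F + (5/2)Lp`. -/
theorem dcra_uniform_bound (m p : ℕ) (hm : 0 < m) (hp : 0 < p)
    (ftilde : Matrix (Fin m) (Fin p) ℝ → ℝ)
    (gradf : Matrix (Fin m) (Fin p) ℝ → Matrix (Fin m) (Fin p) ℝ)
    (Lf : ℝ) (hLf : 0 < Lf)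
    (hderiv : ∀ W : Matrix (Fin m) (Fin p) ℝ, HasFDerivAt ftilde (frobCLM (gradf W)) W)
    (hlip : ∀ W W' : Matrix (Fin m) (Fin p) ℝ,
      frobNorm (gradf W - gradf W') ≤ Lf * frobNorm (W - W'))
    (ρ L : ℝ) (hρ : 0 < ρ) (hL : 0 < L)
    (V : Matrix (Fin m) (Fin p) ℝ) (hV : unitCols V)
    (u : Fin p → ℝ) (lam : ℝ) (htop : isTopEigen V lam u)
    (hcol : ∀ j, ∃ i, Gmap gradf ρ L V u i j ≠ 0)
    (Vp : Matrix (Fin m) (Fin p) ℝ) (hVp : Vp = normalizeCols (Gmap gradf ρ L V u)) :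
    ∀ W : Matrix (Fin m) (Fin p) ℝ, unitCols W →
      ρ * frobInner (GammaOf V u) (Vp - W) ≤
        4 * Lf * (p : ℝ) + 2 * Real.sqrt p * frobNorm (gradf (Escaled m p))
          + (5 / 2) * L * (p : ℝ) :=
  dcra_uniform_bound_general m p hm gradf Lf hLf hlip ρ L hρ hL V hV u hcol Vp hVp

end
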